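/- arXiv:2404.19520 — 7 statements merged into one kernel-verified Lean document; each statement's English description precedes it below -/
import Mathlib

section
/- Let ψ̃I > 0, ω̃ > 0, σ > 0 and ψ̃V, Y, δ be real numbers satisfying the two conditions (i) δ > Y + σ and (ii) ψ̃I²·(δ − Y − σ) > ω̃ − ψ̃V·ψ̃I. Define the 3×3 real matrix A := [[0, 0, ω̃], [−1, −ψ̃I, −ψ̃V], [0, 1, Y − δ]]. Then there exists p₂ > 0 such that, setting p₁ := p₂/ψ̃I + 1/(ψ̃I·ω̃) and p₃ := ψ̃I·p₂, the matrix P := [[p₁, p₂, 0], [p₂, p₃, 0], [0, 0, 1]] is positive definite and the matrix −(Aᵀ·P + P·A) − 2σ·E₃₃ is positive semidefinite, where E₃₃ is the 3×3 matrix whose only nonzero entry is a 1 in position (3,3). (This is the matrix content of Theorem 1: it certifies that the controlled voltage-setting bus is output strictly equilibrium-independent passive with output-passivity index σ.) -/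
open Matrix

set_option maxHeartbeats 1000000 in
/-- Matrix content of Theorem 1: under the two gain conditions there exists a
positive parameter p₂ such that the storage matrix P is positive definite and
−(AᵀP + PA) − 2σE₃₃ is positive semidefinite, certifying OS-EIP with index σ. -/
theorem voltage_setting_bus_OSEIP
    (ψI ω σ ψV Y δ : ℝ) (hψI : 0 < ψI) (hω : 0 < ω) (hσ : 0 < σ)
    (hcond1 : δ > Y + σ)
    (hcond2 : ψI ^ 2 * (δ - Y - σ) > ω - ψV * ψI) :
    let A : Matrix (Fin 3) (Fin 3) ℝ := !![0, 0, ω; -1, -ψI, -ψV; 0, 1, Y - δ]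
    let E₃₃ : Matrix (Fin 3) (Fin 3) ℝ := Matrix.single 2 2 1
    ∃ p₂ : ℝ, 0 < p₂ ∧
      (let p₁ : ℝ := p₂ / ψI + 1 / (ψI * ω)
       let p₃ : ℝ := ψI * p₂
       let P : Matrix (Fin 3) (Fin 3) ℝ := !![p₁, p₂, 0; p₂, p₃, 0; 0, 0, 1]
       P.PosDef ∧ (-(Aᵀ * P + P * A) - (2 * σ) • E₃₃).PosSemidef) := by
  intro A E₃₃
  set d : ℝ := δ - Y - σ with hd_def
  have hd : 0 < d := by simp [hd_def]; linarith
  set D : ℝ := 2 * ψI ^ 2 * d - ω + ψV * ψI with hD_def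
  have hD : 0 < D := by
    have : 0 < ψI ^ 2 * d := by positivity
    simp only [hD_def]; nlinarith
  refine ⟨1 / D, by positivity, ?_⟩
  intro p₁ p₃ P
  have hA : A = !![0, 0, ω; -1, -ψI, -ψV; 0, 1, Y - δ] := rfl
  have hE : E₃₃ = Matrix.single 2 2 1 := rfl
  have hP : P = !![p₁, 1/D, 0; 1/D, p₃, 0; 0, 0, 1] := rfl
  have hp₁d : p₁ = 1/D/ψI + 1/(ψI*ω) := rfl
  have hp₃d : p₃ = ψI*(1/D) := rfl
  clear_value A E₃₃ p₁ p₃ P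
  constructor
  · rw [Matrix.posDef_iff_dotProduct_mulVec]
    constructor
    · rw [hP]
      ext i j; fin_cases i <;> fin_cases j <;> rfl
    · intro x hx
      have hx' : x 0 ≠ 0 ∨ x 1 ≠ 0 ∨ x 2 ≠ 0 := by
        by_contra h
        push_neg at h
        apply hx
        ext i; fin_cases i <;> simp [h.1, h.2.1, h.2.2]
      simp [hP, Matrix.mulVec, dotProduct, Fin.sum_univ_three]
      rw [hp₁d, hp₃d]
      have main : x 0 * ((1/D/ψI + 1/(ψI*ω)) * x 0 + D⁻¹ * x 1) +
          x 1 * (D⁻¹ * x 0 + ψI*(1/D) * x 1) + x 2 * x 2 =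
          (1/(ψI*ω)) * (x 0)^2 + (1/(D*ψI)) * (x 0 + ψI * x 1)^2 + (x 2)^2 := by
        field_simp
        ring
      rw [main]
      have t1 : (0:ℝ) ≤ (1/(ψI*ω)) * (x 0)^2 := by positivity
      have t2 : (0:ℝ) ≤ (1/(D*ψI)) * (x 0 + ψI * x 1)^2 := by positivity
      have t3 : (0:ℝ) ≤ (x 2)^2 := sq_nonneg _
      rcases hx' with h|h|h
      · have : (0:ℝ) < (1/(ψI*ω)) * (x 0)^2 := by positivity
        linarith
      · by_cases hx0 : x 0 = 0
        · have hg : x 0 + ψI * x 1 ≠ 0 := by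
            rw [hx0]; simpa using mul_ne_zero hψI.ne' h
          have : (0:ℝ) < (1/(D*ψI)) * (x 0 + ψI * x 1)^2 := by positivity
          linarith
        · have : (0:ℝ) < (1/(ψI*ω)) * (x 0)^2 := by positivity
          linarith
      · have : (0:ℝ) < (x 2)^2 := by positivity
        linarith
  · have hc₂ : 0 < ψI^2*d - (ω - ψV*ψI) := by simp only [hd_def]; nlinarith
    set b : ℝ := -(2*ψI*d)/D with hb_def
    have hM : -(Aᵀ * P + P * A) - (2 * σ) • E₃₃ =
        !![2/D, 2*ψI/D, b; 2*ψI/D, 2*ψI^2/D, ψI*b; b, ψI*b, 2*d] := by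
      ext i j
      fin_cases i <;> fin_cases j
      all_goals try simp [hA, hE, hP, hp₁d, hp₃d, Matrix.mul_apply, Fin.sum_univ_three, Matrix.transpose_apply,
            Matrix.single_apply, hb_def, Matrix.vecHead, Matrix.vecTail]
      all_goals try field_simp
      all_goals try simp only [hD_def, hd_def]
      all_goals ring
    rw [hM]
    rw [Matrix.posSemidef_iff_dotProduct_mulVec]
    constructor
    · ext i j; fin_cases i <;> fin_cases j <;> rfl
    · intro x
      simp [Matrix.mulVec, dotProduct, Fin.sum_univ_three]
      have main : x 0 * (2/D * x 0 + 2*ψI/D * x 1 + b * x 2) +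
          x 1 * (2*ψI/D * x 0 + 2*ψI^2/D * x 1 + ψI*b * x 2) +
          x 2 * (b * x 0 + ψI*b * x 1 + 2*d * x 2) =
          (2/D) * (x 0 + ψI * x 1 - ψI*d * x 2)^2 +
          (2*d*(ψI^2*d - (ω - ψV*ψI))/D) * (x 2)^2 := by
        rw [hb_def]
        field_simp
        ring
      rw [main]
      positivity
end

section
/- Let L > 0, C > 0 and ψ̃I > 0 be real numbers and let ψ̃V, ω̃, Y, δ be real numbers. Suppose Int, ia, v : ℝ → ℝ are differentiable functions and u : ℝ → ℝ is a function such that for all t: L·Int'(t) = ω̃·v(t), L·ia'(t) = −Int(t) − ψ̃I·ia(t) − ψ̃V·v(t), and C·v'(t) = ia(t) + (Y − δ)·v(t) + u(t). If u(t) = 0 for all t and v(t) = 0 for all t, then ia(t) = 0 for all t and Int(t) = 0 for all t. (The controlled voltage-setting bus is zero-state observable.) -/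
theorem voltage_setting_bus_ZSO_general
    (L C ψI ψV Y δ : ℝ)
    (Int ia v : ℝ → ℝ) (u : ℝ → ℝ)
    (heq2 : ∀ t, L * deriv ia t = -Int t - ψI * ia t - ψV * v t)
    (heq3 : ∀ t, C * deriv v t = ia t + (Y - δ) * v t + u t)
    (hu : ∀ t, u t = 0) (hvz : ∀ t, v t = 0) :
    (∀ t, ia t = 0) ∧ (∀ t, Int t = 0) := by
  obtain rfl : u = 0 := funext hu
  obtain rfl : v = 0 := funext hvz
  obtain rfl : ia = 0 := funext fun t => by
    simpa only [deriv_zero, Pi.zero_apply, mul_zero, add_zero, eq_comm] using heq3 t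
  refine ⟨fun _ => rfl, fun t => ?_⟩
  simpa only [deriv_zero, Pi.zero_apply, mul_zero, sub_zero, zero_eq_neg] using heq2 t

/-- Zero-state observability of the controlled voltage-setting bus: zero input
and zero output (voltage) for all time force all states to be identically zero. -/
theorem voltage_setting_bus_ZSO
    (L C ψI ψV ω Y δ : ℝ) (hL : 0 < L) (hC : 0 < C) (hψI : 0 < ψI)
    (Int ia v : ℝ → ℝ) (u : ℝ → ℝ)
    (hInt : Differentiable ℝ Int) (hia : Differentiable ℝ ia) (hv : Differentiable ℝ v)
    (heq1 : ∀ t, L * deriv Int t = ω * v t)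
    (heq2 : ∀ t, L * deriv ia t = -Int t - ψI * ia t - ψV * v t)
    (heq3 : ∀ t, C * deriv v t = ia t + (Y - δ) * v t + u t)
    (hu : ∀ t, u t = 0) (hvz : ∀ t, v t = 0) :
    (∀ t, ia t = 0) ∧ (∀ t, Int t = 0) :=
  voltage_setting_bus_ZSO_general L C ψI ψV Y δ Int ia v u heq2 heq3 hu hvz
end

section
/- Let n, p be natural numbers, let Q be an n×n real diagonal matrix with strictly positive diagonal entries, let P be an n×n real symmetric positive definite matrix, let A be an n×n real matrix, let B be an n×p real matrix, and let σ > 0. Suppose (i) Q·P·A + Aᵀ·P·Q + σ·B·Bᵀ is negative semidefinite and (ii) Q·P·B = B. Then for all x ∈ ℝⁿ and u ∈ ℝᵖ: xᵀ·Q·P·(A·x + B·u) ≤ ⟨Bᵀx, u⟩ − (σ/2)·‖Bᵀx‖². (Consequently, along every solution of Q·ẋ = A·x + B·u the storage function H(x) = ½·xᵀ·Q·P·Q·x satisfies Ḣ ≤ yᵀu − (σ/2)·yᵀy with output y = Bᵀx, i.e., the cluster dynamics are output strictly equilibrium-independent passive with respect to the exogenous input currents and the bus voltage errors.) -/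
/-!
Writing `S = Q P`, the symmetry of `P` and `Q` makes `Aᵀ P Q = (S A)ᵀ`, so the LMI says
`2 xᵀ S A x + σ ‖Bᵀ x‖² ≤ 0`, while `S B = B` turns the input term `xᵀ S B u` into `(Bᵀ x) ⬝ u`.
-/

open Matrix

namespace Matrix

variable {m k R : Type*} [Fintype m] [Fintype k]

theorem dotProduct_mul_transpose_self_mulVec [CommSemiring R] (B : Matrix m k R) (x : m → R) :
    x ⬝ᵥ (B * Bᵀ) *ᵥ x = Bᵀ *ᵥ x ⬝ᵥ Bᵀ *ᵥ x := by
  rw [← mulVec_mulVec, ← dotProduct_transpose_mulVec Bᵀ, transpose_transpose]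

theorem dotProduct_add_transpose_mulVec [CommSemiring R] (M : Matrix m m R) (x : m → R) :
    x ⬝ᵥ (M + Mᵀ) *ᵥ x = 2 * (x ⬝ᵥ M *ᵥ x) := by
  rw [add_mulVec, dotProduct_add, dotProduct_transpose_mulVec, two_mul]

theorem dotProduct_mulVec_le_of_lmi [Field R] [LinearOrder R] [IsStrictOrderedRing R]
    (S A : Matrix m m R) (B : Matrix m k R) (σ : R) (x : m → R)
    (hLMI : x ⬝ᵥ (S * A + (S * A)ᵀ + σ • (B * Bᵀ)) *ᵥ x ≤ 0) (hSB : S * B = B) (u : k → R) :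
    x ⬝ᵥ S *ᵥ (A *ᵥ x + B *ᵥ u) ≤ Bᵀ *ᵥ x ⬝ᵥ u - σ / 2 * (Bᵀ *ᵥ x ⬝ᵥ Bᵀ *ᵥ x) := by
  have hdrift : 2 * (x ⬝ᵥ (S * A) *ᵥ x) + σ * (Bᵀ *ᵥ x ⬝ᵥ Bᵀ *ᵥ x) ≤ 0 := by
    rwa [add_mulVec, dotProduct_add, dotProduct_add_transpose_mulVec, smul_mulVec,
      dotProduct_smul, dotProduct_mul_transpose_self_mulVec, smul_eq_mul] at hLMI
  have hinput : x ⬝ᵥ (S * B) *ᵥ u = Bᵀ *ᵥ x ⬝ᵥ u := by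
    rw [hSB, dotProduct_mulVec, ← mulVec_transpose]
  rw [mulVec_add, dotProduct_add, mulVec_mulVec, mulVec_mulVec, hinput]
  linarith

end Matrix

theorem cluster_LMI_OSEIP_general
    (n p : ℕ) (d : Fin n → ℝ)
    (Q : Matrix (Fin n) (Fin n) ℝ) (hQ : Q = Matrix.diagonal d)
    (P : Matrix (Fin n) (Fin n) ℝ) (hP : P.PosDef)
    (A : Matrix (Fin n) (Fin n) ℝ) (B : Matrix (Fin n) (Fin p) ℝ)
    (σ : ℝ)
    (hLMI : ∀ x : Fin n → ℝ, x ⬝ᵥ (Q * P * A + Aᵀ * P * Q + σ • (B * Bᵀ)).mulVec x ≤ 0)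
    (hQPB : Q * P * B = B) :
    ∀ (x : Fin n → ℝ) (u : Fin p → ℝ),
      x ⬝ᵥ (Q * P).mulVec (A.mulVec x + B.mulVec u) ≤
        (Bᵀ.mulVec x) ⬝ᵥ u - (σ / 2) * ((Bᵀ.mulVec x) ⬝ᵥ (Bᵀ.mulVec x)) := by
  intro x u
  have hQsymm : Qᵀ = Q := hQ ▸ diagonal_transpose d
  have hPsymm : Pᵀ = P := hP.1.eq
  have hsymm : Aᵀ * P * Q = (Q * P * A)ᵀ := by
    rw [transpose_mul, transpose_mul, hQsymm, hPsymm, Matrix.mul_assoc]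
  exact dotProduct_mulVec_le_of_lmi (Q * P) A B σ x (hsymm ▸ hLMI x) hQPB u

/-- LMI condition of Theorem 2 and the dissipation inequality it implies: if
Q·P·A + Aᵀ·P·Q + σ·B·Bᵀ ⪯ 0 and Q·P·B = B, then along the cluster dynamics
Q·ẋ = A·x + B·u the storage H(x) = ½xᵀQPQx satisfies
Ḣ = xᵀQP(Ax + Bu) ≤ yᵀu − (σ/2)·yᵀy with output y = Bᵀx. -/
theorem cluster_LMI_OSEIP
    (n p : ℕ) (d : Fin n → ℝ) (hd : ∀ i, 0 < d i)
    (Q : Matrix (Fin n) (Fin n) ℝ) (hQ : Q = Matrix.diagonal d)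
    (P : Matrix (Fin n) (Fin n) ℝ) (hP : P.PosDef)
    (A : Matrix (Fin n) (Fin n) ℝ) (B : Matrix (Fin n) (Fin p) ℝ)
    (σ : ℝ) (hσ : 0 < σ)
    (hLMI : ∀ x : Fin n → ℝ, x ⬝ᵥ (Q * P * A + Aᵀ * P * Q + σ • (B * Bᵀ)).mulVec x ≤ 0)
    (hQPB : Q * P * B = B) :
    ∀ (x : Fin n → ℝ) (u : Fin p → ℝ),
      x ⬝ᵥ (Q * P).mulVec (A.mulVec x + B.mulVec u) ≤
        (Bᵀ.mulVec x) ⬝ᵥ u - (σ / 2) * ((Bᵀ.mulVec x) ⬝ᵥ (Bᵀ.mulVec x)) :=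
  cluster_LMI_OSEIP_general n p d Q hQ P hP A B σ hLMI hQPB
end

section
/- Let s, f, e be natural numbers. Let LS : Fin s → ℝ, ΨI : Fin s → ℝ, LF : Fin f → ℝ, τ : Fin f → ℝ, β̃ : Fin f → ℝ, LT : Fin e → ℝ, RT : Fin e → ℝ all be strictly positive. Suppose IntS, iS : ℝ → (Fin s → ℝ), IntF, iF : ℝ → (Fin f → ℝ), and iT : ℝ → (Fin e → ℝ) are differentiable and satisfy, for all t ≥ 0 and all indices: LS j·(IntS j)'(t) = 0 with IntS j (0) = 0; LS j·(iS j)'(t) = −IntS j (t) − ΨI j·iS j (t); (IntF k)'(t) = −τ k·IntF k (t); LF k·(iF k)'(t) = IntF k (t) − β̃ k·iF k (t); and LT l·(iT l)'(t) = −RT l·iT l (t). Then every component of iS, IntF, iF and iT tends to 0 as t → ∞ (and IntS is identically 0). (The cluster dynamics are zero-state detectable: with zero exogenous input and zero voltage outputs, all remaining states converge to zero.) -/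
open Filter Real

lemma aux_const_zero (x : ℝ → ℝ) (hx : Differentiable ℝ x)
    (hder : ∀ t ≥ (0:ℝ), deriv x t = 0) (h0 : x 0 = 0) :
    ∀ t ≥ (0:ℝ), x t = 0 := by
  intro t ht
  have h := constant_of_has_deriv_right_zero (f := x) (a := 0) (b := t)
    hx.continuous.continuousOn
    (fun s hs => by
      have h1 : HasDerivAt x 0 s := by
        have := (hx s).hasDerivAt
        rwa [hder s hs.1] at this
      exact h1.hasDerivWithinAt)
  have := h t ⟨ht, le_refl t⟩
  rwa [h0] at this

lemma aux_exp_sol (b : ℝ) (x : ℝ → ℝ) (hx : Differentiable ℝ x)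
    (hder : ∀ t ≥ (0:ℝ), deriv x t = -b * x t) :
    ∀ t ≥ (0:ℝ), x t = x 0 * Real.exp (-b * t) := by
  intro t ht
  have key : ∀ s ≥ (0:ℝ), HasDerivAt (fun u => Real.exp (b * u) * x u) 0 s := by
    intro s hs
    have he : HasDerivAt (fun u => Real.exp (b * u)) (Real.exp (b * s) * b) s := by
      simpa [mul_comm, Function.comp_def] using (Real.hasDerivAt_exp (b * s)).comp s
        ((hasDerivAt_id s).const_mul b)
    have h1 := he.mul (hx s).hasDerivAt
    have : Real.exp (b * s) * b * x s + Real.exp (b * s) * deriv x s = 0 := by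
      rw [hder s hs]; ring
    rwa [this] at h1
  have h := constant_of_has_deriv_right_zero (f := fun u => Real.exp (b * u) * x u)
    (a := 0) (b := t)
    ((Real.continuous_exp.comp (continuous_const.mul continuous_id)).mul
      hx.continuous).continuousOn
    (fun s hs => (key s hs.1).hasDerivWithinAt)
  have h2 := h t ⟨ht, le_refl t⟩
  simp only [mul_zero, Real.exp_zero, one_mul] at h2
  have hne : Real.exp (b * t) ≠ 0 := Real.exp_ne_zero _
  rw [neg_mul, Real.exp_neg]
  field_simp
  linarith [h2]

lemma aux_tendsto_of_sol (b : ℝ) (hb : 0 < b) (x : ℝ → ℝ)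
    (hsol : ∀ t ≥ (0:ℝ), x t = x 0 * Real.exp (-b * t)) :
    Tendsto x atTop (nhds 0) := by
  have h1 : Tendsto (fun t : ℝ => x 0 * Real.exp (-b * t)) atTop (nhds 0) := by
    have h2 : Tendsto (fun t : ℝ => Real.exp (-b * t)) atTop (nhds 0) := by
      have h3 : Tendsto (fun t : ℝ => -b * t) atTop atBot :=
        tendsto_id.const_mul_atTop_of_neg (neg_lt_zero.mpr hb)
      exact Real.tendsto_exp_atBot.comp h3
    simpa using h2.const_mul (x 0)
  exact h1.congr' ((eventually_ge_atTop (0:ℝ)).mono fun t ht => (hsol t ht).symm) |>.mono_right le_rfl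

lemma aux_forced (b m C : ℝ) (hb : 0 < b) (hm : 0 < m) (hmb : m < b) (hC : 0 ≤ C)
    (x u : ℝ → ℝ) (hx : Differentiable ℝ x)
    (hder : ∀ t ≥ (0:ℝ), deriv x t = -b * x t + u t)
    (hub : ∀ t ≥ (0:ℝ), |u t| ≤ C * Real.exp (-m * t)) :
    Tendsto x atTop (nhds 0) := by
  set w : ℝ → ℝ := fun t => Real.exp (b * t) * x t with hw
  have hwd : ∀ s : ℝ, HasDerivAt w (Real.exp (b * s) * b * x s + Real.exp (b * s) * deriv x s) s := by
    intro s
    have he : HasDerivAt (fun v => Real.exp (b * v)) (Real.exp (b * s) * b) s := by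
      simpa using ((hasDerivAt_id s).const_mul b).exp
    exact he.mul (hx s).hasDerivAt
  have hwd' : ∀ s ≥ (0:ℝ), HasDerivAt w (Real.exp (b * s) * u s) s := by
    intro s hs
    have := hwd s
    have h2 : Real.exp (b * s) * b * x s + Real.exp (b * s) * deriv x s
        = Real.exp (b * s) * u s := by rw [hder s hs]; ring
    rwa [h2] at this
  -- boundary function
  set B : ℝ → ℝ := fun t => |x 0| + C / (b - m) * (Real.exp ((b - m) * t) - 1) with hB
  have hbm : (0:ℝ) < b - m := by linarith
  have hBd : ∀ t : ℝ, HasDerivAt B (C * Real.exp ((b - m) * t)) t := by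
    intro t
    have he : HasDerivAt (fun v => Real.exp ((b - m) * v)) (Real.exp ((b - m) * t) * (b - m)) t := by
      simpa using ((hasDerivAt_id t).const_mul (b - m)).exp
    have := ((he.sub_const 1).const_mul (C / (b - m))).const_add (|x 0|)
    refine this.congr_deriv ?_
    field_simp
  have hbound : ∀ T ≥ (0:ℝ), |w T| ≤ B T := by
    intro T hT
    have := image_norm_le_of_norm_deriv_right_le_deriv_boundary
      (f := w) (f' := fun s => Real.exp (b * s) * u s) (a := 0) (b := T)
      (B := B) (B' := fun t => C * Real.exp ((b - m) * t))
      (by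
        have : Continuous w := (Real.continuous_exp.comp (continuous_const.mul continuous_id)).mul
          hx.continuous
        exact this.continuousOn)
      (fun s hs => (hwd' s hs.1).hasDerivWithinAt)
      (by simp [hw, hB, Real.norm_eq_abs])
      hBd
      (fun s hs => by
        have h1 := hub s hs.1
        have h2 : ‖Real.exp (b * s) * u s‖ = Real.exp (b * s) * |u s| := by
          rw [Real.norm_eq_abs, abs_mul, abs_of_pos (Real.exp_pos _)]
        rw [h2]
        calc Real.exp (b * s) * |u s| ≤ Real.exp (b * s) * (C * Real.exp (-m * s)) := by
              exact mul_le_mul_of_nonneg_left h1 (Real.exp_pos _).le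
          _ = C * Real.exp ((b - m) * s) := by
              rw [show (b-m)*s = b*s + -m*s by ring, Real.exp_add]; ring)
    have h := this ⟨hT, le_refl T⟩
    simpa [Real.norm_eq_abs] using h
  -- now derive bound on |x t|
  have hxb : ∀ t ≥ (0:ℝ), |x t| ≤ |x 0| * Real.exp (-b * t) + C / (b - m) * Real.exp (-m * t) := by
    intro t ht
    have h1 := hbound t ht
    have hpos : (0:ℝ) < Real.exp (b * t) := Real.exp_pos _
    have h2 : |x t| = |w t| * Real.exp (-b * t) := by
      rw [hw]; simp only []
      rw [abs_mul, abs_of_pos hpos, neg_mul, Real.exp_neg]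
      field_simp
    rw [h2]
    have h3 : |w t| * Real.exp (-b * t) ≤ B t * Real.exp (-b * t) :=
      mul_le_mul_of_nonneg_right h1 (Real.exp_pos _).le
    refine h3.trans ?_
    rw [hB]
    have hCm : 0 ≤ C / (b - m) := div_nonneg hC hbm.le
    have : (|x 0| + C / (b - m) * (Real.exp ((b - m) * t) - 1)) * Real.exp (-b * t)
        = |x 0| * Real.exp (-b * t) + C / (b - m) * (Real.exp ((b-m)*t) * Real.exp (-b*t))
          - C / (b - m) * Real.exp (-b * t) := by ring
    rw [this, ← Real.exp_add]
    have he : (b - m) * t + -b * t = -m * t := by ring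
    rw [he]
    have : 0 ≤ C / (b - m) * Real.exp (-b * t) := mul_nonneg hCm (Real.exp_pos _).le
    linarith
  -- squeeze
  have hg : Tendsto (fun t : ℝ => |x 0| * Real.exp (-b * t) + C / (b - m) * Real.exp (-m * t))
      atTop (nhds 0) := by
    have e1 : Tendsto (fun t : ℝ => Real.exp (-b * t)) atTop (nhds 0) :=
      Real.tendsto_exp_atBot.comp (tendsto_id.const_mul_atTop_of_neg (neg_lt_zero.mpr hb))
    have e2 : Tendsto (fun t : ℝ => Real.exp (-m * t)) atTop (nhds 0) :=
      Real.tendsto_exp_atBot.comp (tendsto_id.const_mul_atTop_of_neg (neg_lt_zero.mpr hm))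
    have := (e1.const_mul (|x 0|)).add (e2.const_mul (C / (b - m)))
    simpa using this
  have habs : Tendsto (fun t => |x t|) atTop (nhds 0) := by
    apply squeeze_zero' (Eventually.of_forall fun t => abs_nonneg _)
      ((eventually_ge_atTop (0:ℝ)).mono fun t ht => hxb t ht) hg
  exact tendsto_zero_iff_norm_tendsto_zero.mpr (by simpa [Real.norm_eq_abs] using habs)

/-- Zero-state detectability of a cluster (Proposition 5): with zero exogenous
input and zero voltage outputs, the remaining states (voltage-setting currents,
voltage-following filter states and currents, line currents) all converge to
zero, and the voltage-setting integrator errors are identically zero. -/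
theorem cluster_zero_state_detectable
    (s f e : ℕ)
    (LS : Fin s → ℝ) (ΨI : Fin s → ℝ) (LF : Fin f → ℝ) (τ : Fin f → ℝ)
    (β : Fin f → ℝ) (LT : Fin e → ℝ) (RT : Fin e → ℝ)
    (hLS : ∀ j, 0 < LS j) (hΨI : ∀ j, 0 < ΨI j) (hLF : ∀ k, 0 < LF k)
    (hτ : ∀ k, 0 < τ k) (hβ : ∀ k, 0 < β k) (hLT : ∀ l, 0 < LT l) (hRT : ∀ l, 0 < RT l)
    (IntS iS : ℝ → Fin s → ℝ) (IntF iF : ℝ → Fin f → ℝ) (iT : ℝ → Fin e → ℝ)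
    (hdIntS : ∀ j, Differentiable ℝ (fun t => IntS t j))
    (hdiS : ∀ j, Differentiable ℝ (fun t => iS t j))
    (hdIntF : ∀ k, Differentiable ℝ (fun t => IntF t k))
    (hdiF : ∀ k, Differentiable ℝ (fun t => iF t k))
    (hdiT : ∀ l, Differentiable ℝ (fun t => iT t l))
    (heq1 : ∀ t ≥ (0:ℝ), ∀ j, LS j * deriv (fun t => IntS t j) t = 0)
    (hinit : ∀ j, IntS 0 j = 0)
    (heq2 : ∀ t ≥ (0:ℝ), ∀ j,
      LS j * deriv (fun t => iS t j) t = -IntS t j - ΨI j * iS t j)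
    (heq3 : ∀ t ≥ (0:ℝ), ∀ k, deriv (fun t => IntF t k) t = -τ k * IntF t k)
    (heq4 : ∀ t ≥ (0:ℝ), ∀ k,
      LF k * deriv (fun t => iF t k) t = IntF t k - β k * iF t k)
    (heq5 : ∀ t ≥ (0:ℝ), ∀ l, LT l * deriv (fun t => iT t l) t = -RT l * iT t l) :
    (∀ j, Tendsto (fun t => iS t j) atTop (nhds 0)) ∧
    (∀ k, Tendsto (fun t => IntF t k) atTop (nhds 0)) ∧
    (∀ k, Tendsto (fun t => iF t k) atTop (nhds 0)) ∧
    (∀ l, Tendsto (fun t => iT t l) atTop (nhds 0)) ∧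
    (∀ t ≥ (0:ℝ), ∀ j, IntS t j = 0) := by
  -- IntS is identically zero on [0, ∞)
  have hIntS0 : ∀ t ≥ (0:ℝ), ∀ j, IntS t j = 0 := by
    intro t ht j
    refine aux_const_zero (fun t => IntS t j) (hdIntS j) ?_ (hinit j) t ht
    intro u hu
    have h := heq1 u hu j
    exact (mul_eq_zero.mp h).resolve_left (hLS j).ne'
  refine ⟨?_, ?_, ?_, ?_, hIntS0⟩
  · -- iS
    intro j
    refine aux_tendsto_of_sol (ΨI j / LS j) (div_pos (hΨI j) (hLS j)) _
      (aux_exp_sol _ _ (hdiS j) ?_)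
    intro t ht
    have h := heq2 t ht j
    rw [hIntS0 t ht j] at h
    have hne := (hLS j).ne'
    field_simp at h ⊢
    linarith
  · -- IntF
    intro k
    exact aux_tendsto_of_sol (τ k) (hτ k) _
      (aux_exp_sol _ _ (hdIntF k) (fun t ht => heq3 t ht k))
  · -- iF
    intro k
    have hIntFsol := aux_exp_sol (τ k) _ (hdIntF k) (fun t ht => heq3 t ht k)
    set b := β k / LF k with hbdef
    have hbpos : 0 < b := div_pos (hβ k) (hLF k)
    set m := min (τ k) (b / 2) with hmdef
    have hmpos : 0 < m := lt_min (hτ k) (by linarith)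
    have hmb : m < b := lt_of_le_of_lt (min_le_right _ _) (by linarith)
    refine aux_forced b m (|IntF 0 k| / LF k) hbpos hmpos hmb
      (div_nonneg (abs_nonneg _) (hLF k).le)
      _ (fun t => IntF t k / LF k) (hdiF k) ?_ ?_
    · intro t ht
      have h := heq4 t ht k
      have hne := (hLF k).ne'
      have h2 : deriv (fun t => iF t k) t = (IntF t k - β k * iF t k) / LF k :=
        (eq_div_iff hne).mpr (by linarith)
      show deriv (fun t => iF t k) t = -b * iF t k + IntF t k / LF k
      rw [h2, hbdef]
      field_simp
      ring
    · intro t ht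
      have hmτ : m ≤ τ k := min_le_left _ _
      show |IntF t k / LF k| ≤ |IntF 0 k| / LF k * Real.exp (-m * t)
      rw [hIntFsol t ht, abs_div, abs_mul, abs_of_pos (hLF k),
        abs_of_pos (Real.exp_pos _), div_mul_eq_mul_div]
      have hexp : Real.exp (-τ k * t) ≤ Real.exp (-m * t) :=
        Real.exp_le_exp.mpr (by nlinarith)
      gcongr
      exact (hLF k).le
  · -- iT
    intro l
    refine aux_tendsto_of_sol (RT l / LT l) (div_pos (hRT l) (hLT l)) _
      (aux_exp_sol _ _ (hdiT l) ?_)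
    intro t ht
    have h := heq5 t ht l
    have hne := (hLT l).ne'
    field_simp at h ⊢
    linarith
end

section
/- Let n, p be natural numbers, Q an n×n real diagonal matrix with strictly positive diagonal entries, P an n×n real symmetric positive definite matrix, A_b an n×n real matrix, B an n×p real matrix with Q·P·B = B, σ > 0, and let 𝓛₁, 𝓛₂ be symmetric p×p real matrices with 𝓛₁ − 𝓛₂ negative semidefinite. If Q·P·(A_b − B·𝓛₁·Bᵀ) + (A_b − B·𝓛₁·Bᵀ)ᵀ·P·Q + σ·B·Bᵀ is negative semidefinite, then Q·P·(A_b − B·𝓛₂·Bᵀ) + (A_b − B·𝓛₂·Bᵀ)ᵀ·P·Q + σ·B·Bᵀ is also negative semidefinite. (A cluster with the same buses but a different line topology whose Laplacian dominates the original one in the positive-semidefinite order inherits the verified output strict equilibrium-independent passivity.) -/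
/-!
Since `Q` and `P` are symmetric and `Q P B = B`, replacing `𝓛₁` by `𝓛₂` changes the LMI matrix
by `K + Kᵀ` with `K = B (𝓛₁ - 𝓛₂) Bᵀ`. Its quadratic form at `x` is
`2 (Bᵀ x)ᵀ (𝓛₁ - 𝓛₂) (Bᵀ x) ≤ 0`, so the new LMI is at least as negative as the old one.
-/

namespace Matrix

variable {m n α : Type*} [Fintype m] [Fintype n]

theorem dotProduct_mul_mul_transpose_mulVec [CommSemiring α] (B : Matrix m n α)
    (D : Matrix n n α) (x : m → α) :
    x ⬝ᵥ (B * D * Bᵀ) *ᵥ x = (Bᵀ *ᵥ x) ⬝ᵥ D *ᵥ (Bᵀ *ᵥ x) := by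
  rw [← mulVec_mulVec, ← mulVec_mulVec, dotProduct_mulVec, mulVec_transpose]

variable [CommRing α]

def passivityLMI (Q P A : Matrix m m α) (B : Matrix m n α) (L : Matrix n n α)
    (C : Matrix m m α) : Matrix m m α :=
  Q * P * (A - B * L * Bᵀ) + (A - B * L * Bᵀ)ᵀ * P * Q + C

variable {Q P : Matrix m m α} {B : Matrix m n α}

theorem passivityLMI_eq_add (hQ : Q.IsSymm) (hP : P.IsSymm) (hQPB : Q * P * B = B)
    (A C : Matrix m m α) (L₁ L₂ : Matrix n n α) :
    passivityLMI Q P A B L₂ C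
      = passivityLMI Q P A B L₁ C + (B * (L₁ - L₂) * Bᵀ + (B * (L₁ - L₂) * Bᵀ)ᵀ) := by
  set K := B * (L₁ - L₂) * Bᵀ
  have hA : A - B * L₂ * Bᵀ = A - B * L₁ * Bᵀ + K := by
    simp only [K, Matrix.mul_sub, Matrix.sub_mul]; abel
  have hQPK : Q * P * K = K := by simp only [K, ← Matrix.mul_assoc, hQPB]
  have hKPQ : Kᵀ * P * Q = Kᵀ := by
    rw [← hP.eq, ← hQ.eq, ← transpose_mul, ← transpose_mul, ← Matrix.mul_assoc, hQPK]
  simp only [passivityLMI]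
  rw [hA, Matrix.mul_add, transpose_add, Matrix.add_mul, Matrix.add_mul, hQPK, hKPQ]
  abel

theorem dotProduct_passivityLMI_mulVec (hQ : Q.IsSymm) (hP : P.IsSymm) (hQPB : Q * P * B = B)
    (A C : Matrix m m α) (L₁ L₂ : Matrix n n α) (x : m → α) :
    x ⬝ᵥ passivityLMI Q P A B L₂ C *ᵥ x
      = x ⬝ᵥ passivityLMI Q P A B L₁ C *ᵥ x + 2 * ((Bᵀ *ᵥ x) ⬝ᵥ (L₁ - L₂) *ᵥ (Bᵀ *ᵥ x)) := by
  rw [passivityLMI_eq_add hQ hP hQPB A C L₁ L₂]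
  simp only [add_mulVec, dotProduct_add, dotProduct_transpose_mulVec,
    dotProduct_mul_mul_transpose_mulVec]
  ring

end Matrix

open Matrix

theorem cluster_topology_comparison_general
    (n p : ℕ) (d : Fin n → ℝ)
    (Q : Matrix (Fin n) (Fin n) ℝ) (hQ : Q = Matrix.diagonal d)
    (P : Matrix (Fin n) (Fin n) ℝ) (hP : P.PosDef)
    (Ab : Matrix (Fin n) (Fin n) ℝ) (B : Matrix (Fin n) (Fin p) ℝ)
    (hQPB : Q * P * B = B) (σ : ℝ)
    (L₁ L₂ : Matrix (Fin p) (Fin p) ℝ)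
    (hdom : ∀ x : Fin p → ℝ, x ⬝ᵥ (L₁ - L₂).mulVec x ≤ 0)
    (hLMI₁ : ∀ x : Fin n → ℝ,
      x ⬝ᵥ (Q * P * (Ab - B * L₁ * Bᵀ) + (Ab - B * L₁ * Bᵀ)ᵀ * P * Q
              + σ • (B * Bᵀ)).mulVec x ≤ 0) :
    ∀ x : Fin n → ℝ,
      x ⬝ᵥ (Q * P * (Ab - B * L₂ * Bᵀ) + (Ab - B * L₂ * Bᵀ)ᵀ * P * Q
              + σ • (B * Bᵀ)).mulVec x ≤ 0 := by
  intro x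
  have hQ_symm : Q.IsSymm := hQ ▸ isSymm_diagonal d
  have hP_symm : P.IsSymm := isHermitian_iff_isSymm.mp hP.isHermitian
  have key := dotProduct_passivityLMI_mulVec hQ_symm hP_symm hQPB Ab (σ • (B * Bᵀ)) L₁ L₂ x
  unfold passivityLMI at key
  rw [key]
  linarith [hLMI₁ x, hdom (Bᵀ *ᵥ x)]

/-- Laplacian comparison (Proposition 6): a cluster with the same buses but a
different line topology whose Laplacian 𝓛₂ dominates 𝓛₁ in the positive
semidefinite order inherits the verified reduced-order OS-EIP LMI. -/
theorem cluster_topology_comparison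
    (n p : ℕ) (d : Fin n → ℝ) (hd : ∀ i, 0 < d i)
    (Q : Matrix (Fin n) (Fin n) ℝ) (hQ : Q = Matrix.diagonal d)
    (P : Matrix (Fin n) (Fin n) ℝ) (hP : P.PosDef)
    (Ab : Matrix (Fin n) (Fin n) ℝ) (B : Matrix (Fin n) (Fin p) ℝ)
    (hQPB : Q * P * B = B) (σ : ℝ) (hσ : 0 < σ)
    (L₁ L₂ : Matrix (Fin p) (Fin p) ℝ)
    (hL₁ : L₁.IsSymm) (hL₂ : L₂.IsSymm)
    (hdom : ∀ x : Fin p → ℝ, x ⬝ᵥ (L₁ - L₂).mulVec x ≤ 0)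
    (hLMI₁ : ∀ x : Fin n → ℝ,
      x ⬝ᵥ (Q * P * (Ab - B * L₁ * Bᵀ) + (Ab - B * L₁ * Bᵀ)ᵀ * P * Q
              + σ • (B * Bᵀ)).mulVec x ≤ 0) :
    ∀ x : Fin n → ℝ,
      x ⬝ᵥ (Q * P * (Ab - B * L₂ * Bᵀ) + (Ab - B * L₂ * Bᵀ)ᵀ * P * Q
              + σ • (B * Bᵀ)).mulVec x ≤ 0 :=
  cluster_topology_comparison_general n p d Q hQ P hP Ab B hQPB σ L₁ L₂ hdom hLMI₁
end

section
/- Let n, p, e₁, e₂ be natural numbers, Q an n×n real diagonal matrix with strictly positive diagonal entries, P an n×n real symmetric positive definite matrix, A_b an n×n real matrix, B an n×p real matrix with Q·P·B = B, and σ > 0. Let E₁ be a p×e₁ real matrix, E_n a p×e₂ real matrix, and R₁ : Fin e₁ → ℝ, R_n : Fin e₂ → ℝ strictly positive. Set 𝓛₁ := E₁·diag(R₁)⁻¹·E₁ᵀ and 𝓛₂ := 𝓛₁ + E_n·diag(R_n)⁻¹·E_nᵀ. If Q·P·(A_b − B·𝓛₁·Bᵀ) + (A_b − B·𝓛₁·Bᵀ)ᵀ·P·Q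 + σ·B·Bᵀ is negative semidefinite, then Q·P·(A_b − B·𝓛₂·Bᵀ) + (A_b − B·𝓛₂·Bᵀ)ᵀ·P·Q + σ·B·Bᵀ is also negative semidefinite. (Adding additional lines with positive resistances between the buses of a cluster preserves its verified output strict equilibrium-independent passivity.) -/
open Matrix

/-- Corollary 2: adding additional lines with positive resistances between the
buses of a cluster preserves its verified reduced-order OS-EIP LMI. -/
theorem adding_lines_preserves_OSEIP
    (n p e₁ e₂ : ℕ) (d : Fin n → ℝ) (hd : ∀ i, 0 < d i)
    (Q : Matrix (Fin n) (Fin n) ℝ) (hQ : Q = Matrix.diagonal d)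
    (P : Matrix (Fin n) (Fin n) ℝ) (hP : P.PosDef)
    (Ab : Matrix (Fin n) (Fin n) ℝ) (B : Matrix (Fin n) (Fin p) ℝ)
    (hQPB : Q * P * B = B) (σ : ℝ) (hσ : 0 < σ)
    (E₁ : Matrix (Fin p) (Fin e₁) ℝ) (En : Matrix (Fin p) (Fin e₂) ℝ)
    (R₁ : Fin e₁ → ℝ) (Rn : Fin e₂ → ℝ)
    (hR₁ : ∀ l, 0 < R₁ l) (hRn : ∀ l, 0 < Rn l)
    (L₁ L₂ : Matrix (Fin p) (Fin p) ℝ)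
    (hL₁ : L₁ = E₁ * (Matrix.diagonal R₁)⁻¹ * E₁ᵀ)
    (hL₂ : L₂ = L₁ + En * (Matrix.diagonal Rn)⁻¹ * Enᵀ)
    (hLMI₁ : ∀ x : Fin n → ℝ,
      x ⬝ᵥ (Q * P * (Ab - B * L₁ * Bᵀ) + (Ab - B * L₁ * Bᵀ)ᵀ * P * Q
              + σ • (B * Bᵀ)).mulVec x ≤ 0) :
    ∀ x : Fin n → ℝ,
      x ⬝ᵥ (Q * P * (Ab - B * L₂ * Bᵀ) + (Ab - B * L₂ * Bᵀ)ᵀ * P * Q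
              + σ • (B * Bᵀ)).mulVec x ≤ 0 := by
  intro x
  -- ΔL is positive semidefinite
  obtain ⟨ΔL, hΔL⟩ : ∃ M : Matrix (Fin p) (Fin p) ℝ,
      M = En * (Matrix.diagonal Rn)⁻¹ * Enᵀ := ⟨_, rfl⟩
  rw [← hΔL] at hL₂
  have hDpsd : ((Matrix.diagonal Rn)⁻¹).PosSemidef :=
    (Matrix.posSemidef_diagonal_iff.mpr fun l => (hRn l).le).inv
  have hΔLpsd : ΔL.PosSemidef := by
    rw [hΔL]
    have := hDpsd.mul_mul_conjTranspose_same En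
    simpa [Matrix.conjTranspose_eq_transpose_of_trivial] using this
  -- S = B * ΔL * Bᵀ is PSD
  have hSpsd : (B * ΔL * Bᵀ).PosSemidef := by
    have := hΔLpsd.mul_mul_conjTranspose_same B
    simpa [Matrix.conjTranspose_eq_transpose_of_trivial] using this
  -- symmetry facts
  have hPt : Pᵀ = P := hP.isHermitian.eq
  have hQt : Qᵀ = Q := by rw [hQ, Matrix.diagonal_transpose]
  have hBPQ : Bᵀ * (P * Q) = Bᵀ := by
    have := congrArg Matrix.transpose hQPB
    simpa [Matrix.transpose_mul, hPt, hQt, Matrix.mul_assoc] using this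
  have hQPBΔ : Q * P * (B * ΔL * Bᵀ) = B * ΔL * Bᵀ := by
    calc Q * P * (B * ΔL * Bᵀ) = Q * P * B * (ΔL * Bᵀ) := by
          simp only [Matrix.mul_assoc]
      _ = B * ΔL * Bᵀ := by rw [hQPB, Matrix.mul_assoc]
  have hΔLt : ΔLᵀ = ΔL := (hΔLpsd.isHermitian.eq.symm.trans
    (by simp [Matrix.conjTranspose_eq_transpose_of_trivial])).symm
  have hSt : (B * ΔL * Bᵀ)ᵀ = B * ΔL * Bᵀ := by
    simp [Matrix.transpose_mul, hΔLt, Matrix.mul_assoc]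
  have hΔPQ : (B * ΔL * Bᵀ)ᵀ * P * Q = B * ΔL * Bᵀ := by
    rw [hSt]
    calc B * ΔL * Bᵀ * P * Q = B * ΔL * (Bᵀ * (P * Q)) := by
          simp only [Matrix.mul_assoc]
      _ = B * ΔL * Bᵀ := by rw [hBPQ]
  -- key matrix identity
  have key : Q * P * (Ab - B * L₂ * Bᵀ) + (Ab - B * L₂ * Bᵀ)ᵀ * P * Q + σ • (B * Bᵀ)
      = (Q * P * (Ab - B * L₁ * Bᵀ) + (Ab - B * L₁ * Bᵀ)ᵀ * P * Q + σ • (B * Bᵀ))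
        - ((2 : ℝ) • (B * ΔL * Bᵀ)) := by
    have h2 : B * L₂ * Bᵀ = B * L₁ * Bᵀ + B * ΔL * Bᵀ := by
      rw [hL₂]; rw [Matrix.mul_add, Matrix.add_mul]
    rw [h2]
    have e1 : Q * P * (Ab - (B * L₁ * Bᵀ + B * ΔL * Bᵀ))
        = Q * P * (Ab - B * L₁ * Bᵀ) - B * ΔL * Bᵀ := by
      rw [Matrix.mul_sub, Matrix.mul_sub, Matrix.mul_add, hQPBΔ]
      abel
    have e2 : (Ab - (B * L₁ * Bᵀ + B * ΔL * Bᵀ))ᵀ * P * Q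
        = (Ab - B * L₁ * Bᵀ)ᵀ * P * Q - B * ΔL * Bᵀ := by
      have : (Ab - (B * L₁ * Bᵀ + B * ΔL * Bᵀ))ᵀ
          = (Ab - B * L₁ * Bᵀ)ᵀ - (B * ΔL * Bᵀ)ᵀ := by
        rw [← Matrix.transpose_sub]; congr 1; abel
      rw [this, Matrix.sub_mul, Matrix.sub_mul, hΔPQ]
    rw [e1, e2, two_smul]
    abel
  rw [key]
  have hx := hLMI₁ x
  have hxS : 0 ≤ x ⬝ᵥ (B * ΔL * Bᵀ) *ᵥ x := by
    simpa using hSpsd.dotProduct_mulVec_nonneg x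
  rw [Matrix.sub_mulVec, dotProduct_sub, Matrix.smul_mulVec, dotProduct_smul,
    smul_eq_mul]
  nlinarith
end

section
/- Let L > 0, C > 0, C_eq > 0 and R, Y, δ, ψ_V, ψ_I, ω be real numbers, and let v_SP ∈ ℝ. Suppose i, v, Int : ℝ → ℝ are differentiable and i_Int, i_Ex : ℝ → ℝ are functions such that for all t: Int'(t) = ω·(v(t) − v_SP); L·i'(t) = −R·i(t) − v(t) + u(t) with u(t) := −ψ_V·(v(t) − v_SP) − ψ_I·i(t) − Int(t) − (δ·L/C)·i_C(t) and i_C(t) := C·v'(t); and C_eq·v'(t) = i(t) + Y·v(t) + i_Int(t) + i_Ex(t). Define ia(t) := i(t) + δ·v(t), ψ̃_I := ψ_I + R, ψ̃_V := ψ_V + 1 − δ·ψ̃_I, and ω̃ := L·ω. Then for all t: L·Int'(t) = ω̃·(v(t) − v_SP); L·ia'(t) = −ψ̃_I·ia(t) − ψ̃_V·v(t) − Int(t) + ψ_V·v_SP; and C_eq·v'(t) = ia(t) + (Y − δ)·v(t) + i_Int(t) + i_Ex(t). (The closed loop of a voltage-setting bus with the voltage setting controller, after the coordinate change ia = i + δv,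 takes the form used for the passivity analysis.) -/
/-- Proposition 1: the closed loop of a voltage-setting bus with the voltage
setting controller, after the coordinate change ia = i + δ·v, takes the form
used for the passivity analysis, with modified gains ψ̃I = ψI + R,
ψ̃V = ψV + 1 − δ·ψ̃I and ω̃ = L·ω. -/
theorem voltage_setting_closed_loop_transformed
    (L C Ceq R Y δ ψV ψI ω vSP : ℝ) (hL : 0 < L) (hC : 0 < C) (hCeq : 0 < Ceq)
    (i v Int : ℝ → ℝ) (iInt iEx : ℝ → ℝ)
    (hi : Differentiable ℝ i) (hv : Differentiable ℝ v) (hInt : Differentiable ℝ Int)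
    (heqInt : ∀ t, deriv Int t = ω * (v t - vSP))
    (heqi : ∀ t, L * deriv i t = -R * i t - v t +
      (-ψV * (v t - vSP) - ψI * i t - Int t - (δ * L / C) * (C * deriv v t)))
    (heqv : ∀ t, Ceq * deriv v t = i t + Y * v t + iInt t + iEx t) :
    let ia : ℝ → ℝ := fun t => i t + δ * v t
    let ψI' : ℝ := ψI + R
    let ψV' : ℝ := ψV + 1 - δ * ψI'
    let ω' : ℝ := L * ω
    (∀ t, L * deriv Int t = ω' * (v t - vSP)) ∧
    (∀ t, L * deriv ia t = -ψI' * ia t - ψV' * v t - Int t + ψV * vSP) ∧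
    (∀ t, Ceq * deriv v t = ia t + (Y - δ) * v t + iInt t + iEx t) := by
  intro ia ψI' ψV' ω'
  refine ⟨fun t => by rw [heqInt t]; ring, fun t => ?_, fun t => ?_⟩
  · have hd : deriv ia t = deriv i t + δ * deriv v t := by
      have : HasDerivAt ia (deriv i t + δ * deriv v t) t :=
        ((hi t).hasDerivAt.add ((hv t).hasDerivAt.const_mul δ))
      exact this.deriv
    have h1 := heqi t
    have hC' : (C : ℝ) ≠ 0 := ne_of_gt hC
    have h2 : δ * L / C * (C * deriv v t) = δ * L * deriv v t := by
      field_simp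
    rw [h2] at h1
    simp only [ia, ψI', ψV']
    rw [hd]
    linarith [h1]
  · have := heqv t
    simp only [ia]
    linarith [this]
end
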